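/- arXiv:2006.14842 — 5 statements merged into one kernel-verified Lean document; each statement's English description precedes it below -/
import Mathlib

section
/- Assume the discounted algebraic Riccati equation setup with block upper-triangular transition matrix Ã and stacked input matrix B̃. If the symmetric block matrix P = fromBlocks(P_yy, P_yz, P_yzᵀ, P_zz) satisfies the discounted algebraic Riccati equation, then B̃ᵀ P B̃ = B_yuᵀ P_yy B_yu and the (y,y) block P_yy satisfies the reduced Riccati equation in the controllable variables alone: P_yy = Q_yy + β A_yyᵀ P_yy A_yy − β² A_yyᵀ P_yy B_yu (R_uu + β B_yuᵀ P_yy B_yu)⁻¹ B_yuᵀ P_yy A_yy. -/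
/-!
The coordinate subspace of controllable variables, embedded by `E = fromRows 1 0`, is invariant
under the block upper-triangular `Ã` (`Ã E = E A_yy`) and contains the range of `B̃ = E B_yu`.
Compressing the Riccati equation by `Eᵀ (·) E` therefore turns each term into the corresponding
term of the reduced equation, with `Eᵀ P E = P_yy` and `Eᵀ Q̃ E = Q_yy`.
-/

open Matrix

namespace Matrix

section Blocks

variable {R : Type*} [Semiring R] {m n k : Type*} [Fintype m] [Fintype n] [DecidableEq m]

theorem fromBlocks_zero₂₁_mul_fromRows_one_zero (A : Matrix m m R) (B : Matrix m n R)
    (D : Matrix n n R) :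
    fromBlocks A B 0 D * (fromRows 1 0 : Matrix (m ⊕ n) m R)
      = (fromRows 1 0 : Matrix (m ⊕ n) m R) * A := by
  rw [fromBlocks_mul_fromRows, fromRows_mul]
  simp only [Matrix.mul_one, Matrix.one_mul, Matrix.mul_zero, Matrix.zero_mul, add_zero]

omit [Fintype n] in
theorem fromRows_zero_eq_fromRows_one_zero_mul (B : Matrix m k R) :
    fromRows B (0 : Matrix n k R) = (fromRows 1 0 : Matrix (m ⊕ n) m R) * B := by
  rw [fromRows_mul, Matrix.one_mul, Matrix.zero_mul]

theorem transpose_fromRows_one_zero_mul_mul (M : Matrix (m ⊕ n) (m ⊕ n) R) :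
    (fromRows 1 0 : Matrix (m ⊕ n) m R)ᵀ * M * (fromRows 1 0 : Matrix (m ⊕ n) m R)
      = M.toBlocks₁₁ := by
  rw [← fromBlocks_toBlocks M, transpose_fromRows, fromCols_mul_fromBlocks, fromCols_mul_fromRows,
    toBlocks_fromBlocks₁₁]
  simp only [transpose_one, transpose_zero, Matrix.one_mul, Matrix.zero_mul, add_zero,
    Matrix.mul_one, Matrix.mul_zero]

end Blocks

variable {R : Type*} [CommRing R] {l m n k : Type*} [Fintype m] [Fintype n] [Fintype k]
  [DecidableEq k]

noncomputable def discountedRiccati (β : R) (A : Matrix n n R) (B : Matrix n k R)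
    (Q : Matrix n n R) (S : Matrix k k R) (P : Matrix n n R) : Matrix n n R :=
  Q + β • (Aᵀ * P * A) - β ^ 2 • (Aᵀ * P * B * (S + β • (Bᵀ * P * B))⁻¹ * (Bᵀ * P * A))

omit [Fintype k] [DecidableEq k] in
theorem transpose_mul_mul_mul_mul (E : Matrix n m R) (X : Matrix m l R)
    (P : Matrix n n R) (Y : Matrix m k R) :
    (E * X)ᵀ * P * (E * Y) = Xᵀ * (Eᵀ * P * E) * Y := by
  simp only [transpose_mul, Matrix.mul_assoc]

theorem discountedRiccati_compress (β : R) (E : Matrix n m R) {A' : Matrix n n R}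
    {A : Matrix m m R} (hA : A' * E = E * A) (B : Matrix m k R) (Q : Matrix n n R)
    (S : Matrix k k R) (P : Matrix n n R) :
    Eᵀ * discountedRiccati β A' (E * B) Q S P * E
      = discountedRiccati β A B (Eᵀ * Q * E) S (Eᵀ * P * E) := by
  have hEA : Eᵀ * A'ᵀ = Aᵀ * Eᵀ := by rw [← transpose_mul, hA, transpose_mul]
  simp only [discountedRiccati, transpose_mul_mul_mul_mul, Matrix.sub_mul, Matrix.mul_sub,
    Matrix.add_mul, Matrix.mul_add, Matrix.smul_mul, Matrix.mul_smul]
  simp only [← Matrix.mul_assoc, hEA, Matrix.mul_assoc _ A' E, hA, transpose_mul]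

end Matrix

theorem dare_yy_block_reduced_riccati_general
    {ny nz nu : ℕ}
    (Ayy : Matrix (Fin ny) (Fin ny) ℝ) (Ayz : Matrix (Fin ny) (Fin nz) ℝ)
    (Azz : Matrix (Fin nz) (Fin nz) ℝ) (Byu : Matrix (Fin ny) (Fin nu) ℝ)
    (Qyy : Matrix (Fin ny) (Fin ny) ℝ) (Qyz : Matrix (Fin ny) (Fin nz) ℝ)
    (Qzz : Matrix (Fin nz) (Fin nz) ℝ) (Ruu : Matrix (Fin nu) (Fin nu) ℝ)
    (Pyy : Matrix (Fin ny) (Fin ny) ℝ) (Pyz : Matrix (Fin ny) (Fin nz) ℝ)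
    (Pzz : Matrix (Fin nz) (Fin nz) ℝ)
    (β : ℝ)
    (Atil : Matrix (Fin ny ⊕ Fin nz) (Fin ny ⊕ Fin nz) ℝ)
    (hAtil : Atil = fromBlocks Ayy Ayz 0 Azz)
    (Btil : Matrix (Fin ny ⊕ Fin nz) (Fin nu) ℝ)
    (hBtil : Btil = fromRows Byu 0)
    (Qtil : Matrix (Fin ny ⊕ Fin nz) (Fin ny ⊕ Fin nz) ℝ)
    (hQtil : Qtil = fromBlocks Qyy Qyz Qyzᵀ Qzz)
    (P : Matrix (Fin ny ⊕ Fin nz) (Fin ny ⊕ Fin nz) ℝ)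
    (hP : P = fromBlocks Pyy Pyz Pyzᵀ Pzz)
    (hdare : P = Qtil + β • (Atilᵀ * P * Atil)
      - (β ^ 2) • (Atilᵀ * P * Btil * (Ruu + β • (Btilᵀ * P * Btil))⁻¹
          * (Btilᵀ * P * Atil))) :
    Btilᵀ * P * Btil = Byuᵀ * Pyy * Byu
    ∧ Pyy = Qyy + β • (Ayyᵀ * Pyy * Ayy)
      - (β ^ 2) • (Ayyᵀ * Pyy * Byu * (Ruu + β • (Byuᵀ * Pyy * Byu))⁻¹
          * (Byuᵀ * Pyy * Ayy)) := by
  obtain ⟨E, hE⟩ : ∃ E, E = (fromRows 1 0 : Matrix (Fin ny ⊕ Fin nz) (Fin ny) ℝ) := ⟨_, rfl⟩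
  have hPE : Eᵀ * P * E = Pyy := by
    rw [hE, transpose_fromRows_one_zero_mul_mul, hP, toBlocks_fromBlocks₁₁]
  have hQE : Eᵀ * Qtil * E = Qyy := by
    rw [hE, transpose_fromRows_one_zero_mul_mul, hQtil, toBlocks_fromBlocks₁₁]
  have hAE : Atil * E = E * Ayy := by
    rw [hE, hAtil, fromBlocks_zero₂₁_mul_fromRows_one_zero]
  have hBE : Btil = E * Byu := by rw [hBtil, hE, fromRows_zero_eq_fromRows_one_zero_mul]
  subst hBE
  refine ⟨by rw [transpose_mul_mul_mul_mul, hPE], ?_⟩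
  calc Pyy = Eᵀ * P * E := hPE.symm
    _ = Eᵀ * discountedRiccati β Atil (E * Byu) Qtil Ruu P * E := congrArg (Eᵀ * · * E) hdare
    _ = discountedRiccati β Ayy Byu (Eᵀ * Qtil * E) Ruu (Eᵀ * P * E) :=
      discountedRiccati_compress β E hAE Byu Qtil Ruu P
    _ = _ := by rw [hQE, hPE]; rfl

/-- If the symmetric block matrix `P = fromBlocks(P_yy, P_yz, P_yzᵀ, P_zz)`
satisfies the discounted algebraic Riccati equation with block upper-triangular `Ã` and
stacked `B̃`, then `B̃ᵀ P B̃ = B_yuᵀ P_yy B_yu` and `P_yy` satisfies the reduced Riccati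
equation in the controllable variables alone. -/
theorem dare_yy_block_reduced_riccati
    {ny nz nu : ℕ}
    (Ayy : Matrix (Fin ny) (Fin ny) ℝ) (Ayz : Matrix (Fin ny) (Fin nz) ℝ)
    (Azz : Matrix (Fin nz) (Fin nz) ℝ) (Byu : Matrix (Fin ny) (Fin nu) ℝ)
    (Qyy : Matrix (Fin ny) (Fin ny) ℝ) (Qyz : Matrix (Fin ny) (Fin nz) ℝ)
    (Qzz : Matrix (Fin nz) (Fin nz) ℝ) (Ruu : Matrix (Fin nu) (Fin nu) ℝ)
    (Pyy : Matrix (Fin ny) (Fin ny) ℝ) (Pyz : Matrix (Fin ny) (Fin nz) ℝ)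
    (Pzz : Matrix (Fin nz) (Fin nz) ℝ)
    (β : ℝ) (hβ : 0 < β)
    (hQyy : Qyy.IsSymm) (hQzz : Qzz.IsSymm) (hRuu : Ruu.IsSymm)
    (hPyy : Pyy.IsSymm) (hPzz : Pzz.IsSymm)
    (Atil : Matrix (Fin ny ⊕ Fin nz) (Fin ny ⊕ Fin nz) ℝ)
    (hAtil : Atil = fromBlocks Ayy Ayz 0 Azz)
    (Btil : Matrix (Fin ny ⊕ Fin nz) (Fin nu) ℝ)
    (hBtil : Btil = fromRows Byu 0)
    (Qtil : Matrix (Fin ny ⊕ Fin nz) (Fin ny ⊕ Fin nz) ℝ)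
    (hQtil : Qtil = fromBlocks Qyy Qyz Qyzᵀ Qzz)
    (P : Matrix (Fin ny ⊕ Fin nz) (Fin ny ⊕ Fin nz) ℝ)
    (hP : P = fromBlocks Pyy Pyz Pyzᵀ Pzz)
    (hinv : IsUnit (Ruu + β • (Btilᵀ * P * Btil)).det)
    (hdare : P = Qtil + β • (Atilᵀ * P * Atil)
      - (β ^ 2) • (Atilᵀ * P * Btil * (Ruu + β • (Btilᵀ * P * Btil))⁻¹
          * (Btilᵀ * P * Atil))) :
    Btilᵀ * P * Btil = Byuᵀ * Pyy * Byu
    ∧ Pyy = Qyy + β • (Ayyᵀ * Pyy * Ayy)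
      - (β ^ 2) • (Ayyᵀ * Pyy * Byu * (Ruu + β • (Byuᵀ * Pyy * Byu))⁻¹
          * (Byuᵀ * Pyy * Ayy)) :=
  dare_yy_block_reduced_riccati_general Ayy Ayz Azz Byu Qyy Qyz Qzz Ruu Pyy Pyz Pzz β Atil hAtil
    Btil hBtil Qtil hQtil P hP hdare
end

section
/- Assume the discounted algebraic Riccati equation setup with block upper-triangular transition matrix Ã and stacked input matrix B̃, and suppose the symmetric block matrix P = fromBlocks(P_yy, P_yz, P_yzᵀ, P_zz) satisfies the discounted algebraic Riccati equation. Define the optimal feedback matrix F_y = −(R_uu + β B_yuᵀ P_yy B_yu)⁻¹ β B_yuᵀ P_yy A_yy. Then the (y,z) block P_yz satisfies the Sylvester equation P_yz = Q_yz + β (A_yy + B_yu F_y)ᵀ P_yy A_yz + β (A_yy + B_yu F_y)ᵀ P_yz A_zz. -/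
/-!
Since `Ã` is block upper triangular and `B̃` only acts on the `y`-block, the `(y, z)` block of
the Riccati equation involves `P_yy` and `P_yz` alone. Symmetry of `R_uu` and `P_yy` makes the
Riccati correction term in that block factor through the closed-loop matrix
`(A_yy + B_yu F_y)ᵀ`, which is the Sylvester equation.
-/

open Matrix

namespace Matrix

variable {ι m n u α : Type*} [Fintype m] [Fintype n] [CommRing α]

section Riccati

variable [Fintype ι] [Fintype u] [DecidableEq u]

noncomputable def riccatiMap (Q A : Matrix ι ι α) (B : Matrix ι u α) (R : Matrix u u α) (β : α)
    (P : Matrix ι ι α) : Matrix ι ι α :=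
  Q + β • (Aᵀ * P * A) - β ^ 2 • (Aᵀ * P * B * (R + β • (Bᵀ * P * B))⁻¹ * (Bᵀ * P * A))

noncomputable def riccatiGain (A : Matrix ι ι α) (B : Matrix ι u α) (R : Matrix u u α) (β : α)
    (P : Matrix ι ι α) : Matrix u ι α :=
  -((R + β • (Bᵀ * P * B))⁻¹ * (β • (Bᵀ * P * A)))

theorem transpose_add_mul_riccatiGain {R : Matrix u u α} {P : Matrix ι ι α} (hR : R.IsSymm)
    (hP : P.IsSymm) (A : Matrix ι ι α) (B : Matrix ι u α) (β : α) :
    (A + B * riccatiGain A B R β P)ᵀ = Aᵀ - β • (Aᵀ * P * B * (R + β • (Bᵀ * P * B))⁻¹ * Bᵀ) := by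
  have hM : (R + β • (Bᵀ * P * B))ᵀ = R + β • (Bᵀ * P * B) := by
    rw [transpose_add, transpose_smul, transpose_mul, transpose_mul, transpose_transpose, hR.eq,
      hP.eq, Matrix.mul_assoc]
  rw [riccatiGain, transpose_add, Matrix.mul_neg, transpose_neg, transpose_mul, transpose_mul,
    transpose_nonsing_inv, hM, transpose_smul, transpose_mul, transpose_mul, transpose_transpose,
    hP.eq, sub_eq_add_neg]
  simp only [Matrix.smul_mul, Matrix.mul_assoc]

end Riccati

theorem transpose_fromRows_zero_mul_fromBlocks_mul_fromRows_zero (B : Matrix m u α)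
    (P₁₁ : Matrix m m α) (P₁₂ : Matrix m n α) (P₂₁ : Matrix n m α) (P₂₂ : Matrix n n α) :
    (fromRows B (0 : Matrix n u α))ᵀ * fromBlocks P₁₁ P₁₂ P₂₁ P₂₂ * fromRows B (0 : Matrix n u α) =
      Bᵀ * P₁₁ * B := by
  rw [transpose_fromRows, transpose_zero, fromCols_mul_fromBlocks, fromCols_mul_fromRows]
  simp

theorem toBlocks₁₂_riccatiMap_fromBlocks [Fintype u] [DecidableEq u]
    (Q₁₁ : Matrix m m α) (Q₁₂ : Matrix m n α) (Q₂₁ : Matrix n m α) (Q₂₂ : Matrix n n α)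
    (A₁₁ : Matrix m m α) (A₁₂ : Matrix m n α) (A₂₂ : Matrix n n α) (B : Matrix m u α)
    (R : Matrix u u α) (β : α)
    (P₁₁ : Matrix m m α) (P₁₂ : Matrix m n α) (P₂₁ : Matrix n m α) (P₂₂ : Matrix n n α) :
    (riccatiMap (fromBlocks Q₁₁ Q₁₂ Q₂₁ Q₂₂) (fromBlocks A₁₁ A₁₂ 0 A₂₂) (fromRows B 0) R β
      (fromBlocks P₁₁ P₁₂ P₂₁ P₂₂)).toBlocks₁₂ =
    Q₁₂ + β • (A₁₁ᵀ * (P₁₁ * A₁₂ + P₁₂ * A₂₂))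
      - β ^ 2 • (A₁₁ᵀ * P₁₁ * B * (R + β • (Bᵀ * P₁₁ * B))⁻¹ * (Bᵀ * (P₁₁ * A₁₂ + P₁₂ * A₂₂))) := by
  rw [riccatiMap, transpose_fromRows_zero_mul_fromBlocks_mul_fromRows_zero, sub_eq_add_neg,
    sub_eq_add_neg]
  simp only [fromBlocks_transpose, transpose_fromRows, transpose_zero, fromBlocks_multiply,
    fromCols_mul_fromBlocks, fromBlocks_mul_fromRows, fromRows_mul, mul_fromCols,
    fromCols_fromRows_eq_fromBlocks, Matrix.mul_zero, Matrix.zero_mul, add_zero,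
    fromBlocks_smul, fromBlocks_neg, fromBlocks_add, toBlocks_fromBlocks₁₂]
  simp only [Matrix.mul_assoc, Matrix.mul_add]

end Matrix

theorem dare_yz_block_sylvester_general
    {ny nz nu : ℕ}
    (Ayy : Matrix (Fin ny) (Fin ny) ℝ) (Ayz : Matrix (Fin ny) (Fin nz) ℝ)
    (Azz : Matrix (Fin nz) (Fin nz) ℝ) (Byu : Matrix (Fin ny) (Fin nu) ℝ)
    (Qyy : Matrix (Fin ny) (Fin ny) ℝ) (Qyz : Matrix (Fin ny) (Fin nz) ℝ)
    (Qzz : Matrix (Fin nz) (Fin nz) ℝ) (Ruu : Matrix (Fin nu) (Fin nu) ℝ)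
    (Pyy : Matrix (Fin ny) (Fin ny) ℝ) (Pyz : Matrix (Fin ny) (Fin nz) ℝ)
    (Pzz : Matrix (Fin nz) (Fin nz) ℝ)
    (β : ℝ)
    (hRuu : Ruu.IsSymm) (hPyy : Pyy.IsSymm)
    (Atil : Matrix (Fin ny ⊕ Fin nz) (Fin ny ⊕ Fin nz) ℝ)
    (hAtil : Atil = fromBlocks Ayy Ayz 0 Azz)
    (Btil : Matrix (Fin ny ⊕ Fin nz) (Fin nu) ℝ)
    (hBtil : Btil = fromRows Byu 0)
    (Qtil : Matrix (Fin ny ⊕ Fin nz) (Fin ny ⊕ Fin nz) ℝ)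
    (hQtil : Qtil = fromBlocks Qyy Qyz Qyzᵀ Qzz)
    (P : Matrix (Fin ny ⊕ Fin nz) (Fin ny ⊕ Fin nz) ℝ)
    (hP : P = fromBlocks Pyy Pyz Pyzᵀ Pzz)
    (hdare : P = Qtil + β • (Atilᵀ * P * Atil)
      - (β ^ 2) • (Atilᵀ * P * Btil * (Ruu + β • (Btilᵀ * P * Btil))⁻¹
          * (Btilᵀ * P * Atil)))
    (Fy : Matrix (Fin nu) (Fin ny) ℝ)
    (hFy : Fy = -((Ruu + β • (Byuᵀ * Pyy * Byu))⁻¹ * (β • (Byuᵀ * Pyy * Ayy)))) :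
    Pyz = Qyz + β • ((Ayy + Byu * Fy)ᵀ * Pyy * Ayz)
      + β • ((Ayy + Byu * Fy)ᵀ * Pyz * Azz) := by
  have hfix : P = riccatiMap Qtil Atil Btil Ruu β P := hdare
  subst hAtil hBtil hQtil hP
  have h₁₂ := congrArg toBlocks₁₂ hfix
  rw [toBlocks_fromBlocks₁₂, toBlocks₁₂_riccatiMap_fromBlocks] at h₁₂
  calc Pyz = _ := h₁₂
    _ = Qyz + β • ((Ayy + Byu * Fy)ᵀ * (Pyy * Ayz + Pyz * Azz)) := by
      rw [show Fy = riccatiGain Ayy Byu Ruu β Pyy from hFy,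
        transpose_add_mul_riccatiGain hRuu hPyy, Matrix.sub_mul, smul_sub, Matrix.smul_mul,
        smul_smul, ← sq, ← add_sub_assoc]
      simp only [Matrix.mul_assoc]
    _ = _ := by rw [Matrix.mul_add, smul_add, ← add_assoc, Matrix.mul_assoc, Matrix.mul_assoc]

/-- If `P` satisfies the discounted algebraic Riccati equation, then with
the optimal feedback `F_y = −(R_uu + β B_yuᵀ P_yy B_yu)⁻¹ β B_yuᵀ P_yy A_yy`, the block
`P_yz` satisfies the Sylvester equation
`P_yz = Q_yz + β (A_yy + B_yu F_y)ᵀ P_yy A_yz + β (A_yy + B_yu F_y)ᵀ P_yz A_zz`. -/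
theorem dare_yz_block_sylvester
    {ny nz nu : ℕ}
    (Ayy : Matrix (Fin ny) (Fin ny) ℝ) (Ayz : Matrix (Fin ny) (Fin nz) ℝ)
    (Azz : Matrix (Fin nz) (Fin nz) ℝ) (Byu : Matrix (Fin ny) (Fin nu) ℝ)
    (Qyy : Matrix (Fin ny) (Fin ny) ℝ) (Qyz : Matrix (Fin ny) (Fin nz) ℝ)
    (Qzz : Matrix (Fin nz) (Fin nz) ℝ) (Ruu : Matrix (Fin nu) (Fin nu) ℝ)
    (Pyy : Matrix (Fin ny) (Fin ny) ℝ) (Pyz : Matrix (Fin ny) (Fin nz) ℝ)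
    (Pzz : Matrix (Fin nz) (Fin nz) ℝ)
    (β : ℝ) (hβ : 0 < β)
    (hQyy : Qyy.IsSymm) (hQzz : Qzz.IsSymm) (hRuu : Ruu.IsSymm)
    (hPyy : Pyy.IsSymm) (hPzz : Pzz.IsSymm)
    (Atil : Matrix (Fin ny ⊕ Fin nz) (Fin ny ⊕ Fin nz) ℝ)
    (hAtil : Atil = fromBlocks Ayy Ayz 0 Azz)
    (Btil : Matrix (Fin ny ⊕ Fin nz) (Fin nu) ℝ)
    (hBtil : Btil = fromRows Byu 0)
    (Qtil : Matrix (Fin ny ⊕ Fin nz) (Fin ny ⊕ Fin nz) ℝ)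
    (hQtil : Qtil = fromBlocks Qyy Qyz Qyzᵀ Qzz)
    (P : Matrix (Fin ny ⊕ Fin nz) (Fin ny ⊕ Fin nz) ℝ)
    (hP : P = fromBlocks Pyy Pyz Pyzᵀ Pzz)
    (hinv : IsUnit (Ruu + β • (Btilᵀ * P * Btil)).det)
    (hdare : P = Qtil + β • (Atilᵀ * P * Atil)
      - (β ^ 2) • (Atilᵀ * P * Btil * (Ruu + β • (Btilᵀ * P * Btil))⁻¹
          * (Btilᵀ * P * Atil)))
    (Fy : Matrix (Fin nu) (Fin ny) ℝ)
    (hFy : Fy = -((Ruu + β • (Byuᵀ * Pyy * Byu))⁻¹ * (β • (Byuᵀ * Pyy * Ayy)))) :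
    Pyz = Qyz + β • ((Ayy + Byu * Fy)ᵀ * Pyy * Ayz)
      + β • ((Ayy + Byu * Fy)ᵀ * Pyz * Azz) :=
  dare_yz_block_sylvester_general Ayy Ayz Azz Byu Qyy Qyz Qzz Ruu Pyy Pyz Pzz β hRuu hPyy Atil hAtil
    Btil hBtil Qtil hQtil P hP hdare Fy hFy
end

section
/- Consider the Hamiltonian pencil (N, L) of the Stackelberg problem with non-controllable shocks: L = [[I, 0, −β B_yu R_uu⁻¹ B_yuᵀ, 0], [0, I, 0, 0], [0, 0, β A_yyᵀ, 0], [0, 0, β A_yzᵀ, β A_zzᵀ]] and N = [[A_yy, A_yz, 0, 0], [0, A_zz, 0, 0], [−Q_yy, −Q_yz, I, 0], [−Q_yzᵀ, −Q_zz, 0, I]]. If ρ is an eigenvalue of the shock transition matrix A_zz (i.e., det(A_zz − ρ I) = 0), then ρ is a generalized eigenvalue of the pencil: det(N − ρ L) = 0. -/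
/-!
The rows of `N` and `L` indexed by the shock variables `z` are `(0, A_zz, 0, 0)` and
`(0, I, 0, 0)`. Hence a left eigenvector `w` of `A_zz` for `ρ`, placed in the `z`-slot, is a
left eigenvector of the pencil: `(0, w, 0, 0) N = ρ (0, w, 0, 0) L`, so `N − ρ L` is singular.
-/

open Matrix

namespace Matrix

variable {l m n o α : Type*} [Fintype n] [Fintype o] [NonUnitalNonAssocSemiring α]

theorem sumElim_zero_vecMul_fromBlocks (x : n → α) (A : Matrix n l α) (B : Matrix n m α)
    (C : Matrix o l α) (D : Matrix o m α) :
    (x ⊕ᵥ 0) ᵥ* fromBlocks A B C D = x ᵥ* A ⊕ᵥ x ᵥ* B := by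
  simp [vecMul_fromBlocks]

theorem zero_sumElim_vecMul_fromBlocks (x : o → α) (A : Matrix n l α) (B : Matrix n m α)
    (C : Matrix o l α) (D : Matrix o m α) :
    (0 ⊕ᵥ x) ᵥ* fromBlocks A B C D = x ᵥ* C ⊕ᵥ x ᵥ* D := by
  simp [vecMul_fromBlocks]

end Matrix

section Pencil

variable {n K : Type*} [Fintype n] [DecidableEq n] [Field K]

theorem Matrix.det_sub_smul_eq_zero_of_vecMul_eq_smul {N L : Matrix n n K} {ρ : K}
    {x : n → K} (hx : x ≠ 0) (hxNL : x ᵥ* N = ρ • (x ᵥ* L)) : (N - ρ • L).det = 0 :=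
  exists_vecMul_eq_zero_iff.1
    ⟨x, hx, by rw [vecMul_sub, vecMul_smul, hxNL, sub_self]⟩

theorem Matrix.exists_vecMul_eq_smul_of_det_sub_smul_one_eq_zero {A : Matrix n n K} {ρ : K}
    (h : (A - ρ • 1).det = 0) : ∃ w ≠ 0, w ᵥ* A = ρ • w := by
  obtain ⟨w, hw, hwA⟩ := exists_vecMul_eq_zero_iff.2 h
  refine ⟨w, hw, ?_⟩
  rwa [vecMul_sub, vecMul_smul, vecMul_one, sub_eq_zero] at hwA

end Pencil

theorem pencil_eigenvalue_of_shock_matrix_general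
    {ny nz nu : ℕ}
    (Ayy : Matrix (Fin ny) (Fin ny) ℝ) (Ayz : Matrix (Fin ny) (Fin nz) ℝ)
    (Azz : Matrix (Fin nz) (Fin nz) ℝ) (Byu : Matrix (Fin ny) (Fin nu) ℝ)
    (Qyy : Matrix (Fin ny) (Fin ny) ℝ) (Qyz : Matrix (Fin ny) (Fin nz) ℝ)
    (Qzz : Matrix (Fin nz) (Fin nz) ℝ) (Ruu : Matrix (Fin nu) (Fin nu) ℝ)
    (β : ℝ)
    (L N : Matrix ((Fin ny ⊕ Fin nz) ⊕ (Fin ny ⊕ Fin nz))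
      ((Fin ny ⊕ Fin nz) ⊕ (Fin ny ⊕ Fin nz)) ℝ)
    (hL : L = fromBlocks (fromBlocks 1 0 0 1)
      (fromBlocks (-(β • (Byu * Ruu⁻¹ * Byuᵀ))) 0 0 0)
      0
      (fromBlocks (β • Ayyᵀ) 0 (β • Ayzᵀ) (β • Azzᵀ)))
    (hN : N = fromBlocks (fromBlocks Ayy Ayz 0 Azz) 0
      (fromBlocks (-Qyy) (-Qyz) (-Qyzᵀ) (-Qzz)) 1)
    (ρ : ℝ) (hρ : (Azz - ρ • 1).det = 0) :
    (N - ρ • L).det = 0 := by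
  obtain ⟨w, hw, hwA⟩ := exists_vecMul_eq_smul_of_det_sub_smul_one_eq_zero hρ
  have hx : ((0 ⊕ᵥ w) ⊕ᵥ 0 : (Fin ny ⊕ Fin nz) ⊕ (Fin ny ⊕ Fin nz) → ℝ) ≠ 0 := fun h =>
    hw (funext fun i => congrFun h (Sum.inl (Sum.inr i)))
  refine det_sub_smul_eq_zero_of_vecMul_eq_smul hx ?_
  subst hL hN
  simp only [sumElim_zero_vecMul_fromBlocks, zero_sumElim_vecMul_fromBlocks, vecMul_one,
    vecMul_zero, hwA, Sum.elim_zero_zero]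
  ext ((_ | _) | _) <;> simp

/-- For the Hamiltonian pencil `(N, L)` of the Stackelberg problem with
non-controllable shocks, every eigenvalue `ρ` of the shock transition matrix `A_zz` is
a generalized eigenvalue of the pencil: `det(N − ρ L) = 0`. -/
theorem pencil_eigenvalue_of_shock_matrix
    {ny nz nu : ℕ}
    (Ayy : Matrix (Fin ny) (Fin ny) ℝ) (Ayz : Matrix (Fin ny) (Fin nz) ℝ)
    (Azz : Matrix (Fin nz) (Fin nz) ℝ) (Byu : Matrix (Fin ny) (Fin nu) ℝ)
    (Qyy : Matrix (Fin ny) (Fin ny) ℝ) (Qyz : Matrix (Fin ny) (Fin nz) ℝ)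
    (Qzz : Matrix (Fin nz) (Fin nz) ℝ) (Ruu : Matrix (Fin nu) (Fin nu) ℝ)
    (hQyy : Qyy.IsSymm) (hQzz : Qzz.IsSymm) (hRuu : Ruu.IsSymm)
    (hRinv : IsUnit Ruu.det)
    (β : ℝ)
    (L N : Matrix ((Fin ny ⊕ Fin nz) ⊕ (Fin ny ⊕ Fin nz))
      ((Fin ny ⊕ Fin nz) ⊕ (Fin ny ⊕ Fin nz)) ℝ)
    (hL : L = fromBlocks (fromBlocks 1 0 0 1)
      (fromBlocks (-(β • (Byu * Ruu⁻¹ * Byuᵀ))) 0 0 0)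
      0
      (fromBlocks (β • Ayyᵀ) 0 (β • Ayzᵀ) (β • Azzᵀ)))
    (hN : N = fromBlocks (fromBlocks Ayy Ayz 0 Azz) 0
      (fromBlocks (-Qyy) (-Qyz) (-Qyzᵀ) (-Qzz)) 1)
    (ρ : ℝ) (hρ : (Azz - ρ • 1).det = 0) :
    (N - ρ • L).det = 0 :=
  pencil_eigenvalue_of_shock_matrix_general Ayy Ayz Azz Byu Qyy Qyz Qzz Ruu β L N hL hN ρ hρ
end

section
/- Consider the Hamiltonian pencil (N, L) of the Stackelberg problem with non-controllable shocks: L = [[I, 0, −β B_yu R_uu⁻¹ B_yuᵀ, 0], [0, I, 0, 0], [0, 0, β A_yyᵀ, 0], [0, 0, β A_yzᵀ, β A_zzᵀ]] and N = [[A_yy, A_yz, 0, 0], [0, A_zz, 0, 0], [−Q_yy, −Q_yz, I, 0], [−Q_yzᵀ, −Q_zz, 0, I]]. Let β ≠ 0 and let ρ ≠ 0 be an eigenvalue of the shock transition matrix A_zz. Then the mirror value 1/(βρ) is a generalized eigenvalue of the pencil: det(N − (1/(βρ)) L) = 0. (These mirror roots, produced by including the Lagrange multiplier ν on the non-controllable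 dynamics, are all missing in Anderson et al. (1996).) -/
open Matrix

/-!
A left eigenvector `w` of `A_zz` for `ρ` placed in the `ν`-coordinates is annihilated by
`N − c L`: the `ν`-block column of `N` is `(0, 0, 0, I)` and that of `L` is
`(0, 0, 0, β A_zzᵀ)`, so the image is `w − c β A_zzᵀ w = (1 − c β ρ) w`, which vanishes at
`c = 1/(βρ)`.
-/

theorem Matrix.exists_transpose_mulVec_eq_smul_of_det_sub_smul_one_eq_zero
    {K n : Type*} [Field K] [Fintype n] [DecidableEq n] {A : Matrix n n K} {ρ : K}
    (h : (A - ρ • 1).det = 0) : ∃ w ≠ 0, Aᵀ *ᵥ w = ρ • w := by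
  obtain ⟨w, hw0, hw⟩ := exists_vecMul_eq_zero_iff.2 h
  rw [vecMul_sub, vecMul_smul, vecMul_one, sub_eq_zero] at hw
  exact ⟨w, hw0, by rw [mulVec_transpose, hw]⟩

theorem pencil_mulVec_multiplier_direction {K ny nz : Type*} [Field K] [Fintype ny]
    [Fintype nz] [DecidableEq ny] [DecidableEq nz]
    (Ayy : Matrix ny ny K) (Ayz : Matrix ny nz K) (Azz : Matrix nz nz K)
    (P Qyy : Matrix ny ny K) (Qyz : Matrix ny nz K) (Qzy : Matrix nz ny K)
    (Qzz : Matrix nz nz K) (β c : K) (w : nz → K) :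
    (fromBlocks (fromBlocks Ayy Ayz 0 Azz) 0 (fromBlocks Qyy Qyz Qzy Qzz) 1 -
        c • fromBlocks (fromBlocks 1 0 0 1) (fromBlocks P 0 0 0) 0
          (fromBlocks (β • Ayyᵀ) 0 (β • Ayzᵀ) (β • Azzᵀ))) *ᵥ
        (Sum.elim 0 (Sum.elim 0 w) : (ny ⊕ nz) ⊕ (ny ⊕ nz) → K) =
      (Sum.elim 0 (Sum.elim 0 (w - (c * β) • Azzᵀ *ᵥ w)) : (ny ⊕ nz) ⊕ (ny ⊕ nz) → K) := by
  rw [sub_mulVec, smul_mulVec]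
  simp only [fromBlocks_mulVec, mulVec_zero, zero_mulVec, one_mulVec, smul_mulVec,
    Sum.elim_comp_inl, Sum.elim_comp_inr, add_zero, zero_add, Sum.elim_zero_zero]
  ext (i | i | i) <;> simp [mul_assoc]

theorem pencil_mirror_eigenvalue_of_shock_matrix_general
    {ny nz nu : ℕ}
    (Ayy : Matrix (Fin ny) (Fin ny) ℝ) (Ayz : Matrix (Fin ny) (Fin nz) ℝ)
    (Azz : Matrix (Fin nz) (Fin nz) ℝ) (Byu : Matrix (Fin ny) (Fin nu) ℝ)
    (Qyy : Matrix (Fin ny) (Fin ny) ℝ) (Qyz : Matrix (Fin ny) (Fin nz) ℝ)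
    (Qzz : Matrix (Fin nz) (Fin nz) ℝ) (Ruu : Matrix (Fin nu) (Fin nu) ℝ)
    (β : ℝ) (hβ : β ≠ 0)
    (L N : Matrix ((Fin ny ⊕ Fin nz) ⊕ (Fin ny ⊕ Fin nz))
      ((Fin ny ⊕ Fin nz) ⊕ (Fin ny ⊕ Fin nz)) ℝ)
    (hL : L = fromBlocks (fromBlocks 1 0 0 1)
      (fromBlocks (-(β • (Byu * Ruu⁻¹ * Byuᵀ))) 0 0 0)
      0
      (fromBlocks (β • Ayyᵀ) 0 (β • Ayzᵀ) (β • Azzᵀ)))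
    (hN : N = fromBlocks (fromBlocks Ayy Ayz 0 Azz) 0
      (fromBlocks (-Qyy) (-Qyz) (-Qyzᵀ) (-Qzz)) 1)
    (ρ : ℝ) (hρ0 : ρ ≠ 0) (hρ : (Azz - ρ • 1).det = 0) :
    (N - (1 / (β * ρ)) • L).det = 0 := by
  obtain ⟨w, hw0, hw⟩ := exists_transpose_mulVec_eq_smul_of_det_sub_smul_one_eq_zero hρ
  have hmirror : (1 / (β * ρ) * β) • ρ • w = w := by
    rw [smul_smul, show 1 / (β * ρ) * β * ρ = 1 by field_simp, one_smul]
  rw [← exists_mulVec_eq_zero_iff]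
  refine ⟨Sum.elim 0 (Sum.elim 0 w), fun h => hw0 (funext (congrFun h <| Sum.inr <| Sum.inr ·)), ?_⟩
  rw [hL, hN, pencil_mulVec_multiplier_direction, hw, hmirror, sub_self, Sum.elim_zero_zero,
    Sum.elim_zero_zero]

/-- For the Hamiltonian pencil `(N, L)` of the Stackelberg problem with
non-controllable shocks, with `β ≠ 0` and `ρ ≠ 0` an eigenvalue of the shock transition
matrix `A_zz`, the mirror value `1/(βρ)` is a generalized eigenvalue of the pencil:
`det(N − (1/(βρ)) L) = 0`. These mirror roots, produced by including the Lagrange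
multiplier `ν` on the non-controllable dynamics, are all missing in
Anderson et al. (1996). -/
theorem pencil_mirror_eigenvalue_of_shock_matrix
    {ny nz nu : ℕ}
    (Ayy : Matrix (Fin ny) (Fin ny) ℝ) (Ayz : Matrix (Fin ny) (Fin nz) ℝ)
    (Azz : Matrix (Fin nz) (Fin nz) ℝ) (Byu : Matrix (Fin ny) (Fin nu) ℝ)
    (Qyy : Matrix (Fin ny) (Fin ny) ℝ) (Qyz : Matrix (Fin ny) (Fin nz) ℝ)
    (Qzz : Matrix (Fin nz) (Fin nz) ℝ) (Ruu : Matrix (Fin nu) (Fin nu) ℝ)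
    (hQyy : Qyy.IsSymm) (hQzz : Qzz.IsSymm) (hRuu : Ruu.IsSymm)
    (hRinv : IsUnit Ruu.det)
    (β : ℝ) (hβ : β ≠ 0)
    (L N : Matrix ((Fin ny ⊕ Fin nz) ⊕ (Fin ny ⊕ Fin nz))
      ((Fin ny ⊕ Fin nz) ⊕ (Fin ny ⊕ Fin nz)) ℝ)
    (hL : L = fromBlocks (fromBlocks 1 0 0 1)
      (fromBlocks (-(β • (Byu * Ruu⁻¹ * Byuᵀ))) 0 0 0)
      0
      (fromBlocks (β • Ayyᵀ) 0 (β • Ayzᵀ) (β • Azzᵀ)))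
    (hN : N = fromBlocks (fromBlocks Ayy Ayz 0 Azz) 0
      (fromBlocks (-Qyy) (-Qyz) (-Qyzᵀ) (-Qzz)) 1)
    (ρ : ℝ) (hρ0 : ρ ≠ 0) (hρ : (Azz - ρ • 1).det = 0) :
    (N - (1 / (β * ρ)) • L).det = 0 :=
  pencil_mirror_eigenvalue_of_shock_matrix_general Ayy Ayz Azz Byu Qyy Qyz Qzz Ruu β hβ L N hL hN ρ
    hρ0 hρ
end

section
/- Let A be a real n×n matrix, B a real n×m matrix, Q a symmetric n×n matrix, R a symmetric invertible m×m matrix, and β ≠ 0 a scalar. Define the 2n×2n matrices L = [[I, −β B R⁻¹ Bᵀ], [0, β Aᵀ]], N = [[A, 0], [−Q, I]], and the standard symplectic form J = [[0, I], [−I, 0]]. Then N J Nᵀ = β⁻¹ L J Lᵀ. Consequently, if L is invertible, the Hamiltonian matrix H = L⁻¹ N satisfies H J Hᵀ = β⁻¹ J; in particular for β = 1, H is a symplectic matrix. -/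
open Matrix

/-!
The block matrices `N` and `L` of the pencil both transport the form `J = [[0, I], [−I, 0]]` to
the same skew block matrix: `N J Nᵀ = [[0, A], [−Aᵀ, 0]]` because `Q` is symmetric, and
`L J Lᵀ = β [[0, A], [−Aᵀ, 0]]` because `B R⁻¹ Bᵀ` is symmetric. Conjugating by `L⁻¹` then gives
`H J Hᵀ = β⁻¹ J` for `H = L⁻¹ N`.
-/

namespace Matrix

variable {n m α : Type*} [Fintype m] [DecidableEq m] [CommRing α]

theorem IsSymm.mul_nonsing_inv_mul_transpose {R : Matrix m m α} (hR : R.IsSymm)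
    (B : Matrix n m α) : (B * R⁻¹ * Bᵀ).IsSymm := by
  simp [IsSymm, transpose_mul, transpose_nonsing_inv, hR.eq, Matrix.mul_assoc]

variable [Fintype n] [DecidableEq n]

theorem fromBlocks_mul_symplectic_mul_transpose_of_lower_isSymm (A : Matrix n n α)
    {C : Matrix n n α} (hC : C.IsSymm) :
    fromBlocks A 0 C 1 * fromBlocks 0 1 (-1) 0 * (fromBlocks A 0 C 1)ᵀ =
      fromBlocks 0 A (-Aᵀ) 0 := by
  simp [fromBlocks_transpose, fromBlocks_multiply, hC.eq]

theorem fromBlocks_mul_symplectic_mul_transpose_of_upper_isSymm {P : Matrix n n α}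
    (hP : P.IsSymm) (D : Matrix n n α) :
    fromBlocks 1 P 0 D * fromBlocks 0 1 (-1) 0 * (fromBlocks 1 P 0 D)ᵀ =
      fromBlocks 0 Dᵀ (-D) 0 := by
  simp [fromBlocks_transpose, fromBlocks_multiply, hP.eq]

theorem nonsing_inv_mul_mul_transpose_eq_smul {L N J : Matrix n n α} {c : α}
    (hL : IsUnit L.det) (h : N * J * Nᵀ = c • (L * J * Lᵀ)) :
    (L⁻¹ * N) * J * (L⁻¹ * N)ᵀ = c • J := by
  have hLt : IsUnit Lᵀ.det := by rwa [det_transpose]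
  calc (L⁻¹ * N) * J * (L⁻¹ * N)ᵀ = L⁻¹ * (N * J * Nᵀ) * (Lᵀ)⁻¹ := by
        rw [transpose_mul, transpose_nonsing_inv]; noncomm_ring
    _ = c • ((L⁻¹ * L) * J * (Lᵀ * (Lᵀ)⁻¹)) := by
        rw [h, Matrix.mul_smul, Matrix.smul_mul]; noncomm_ring
    _ = c • J := by rw [nonsing_inv_mul L hL, mul_nonsing_inv Lᵀ hLt, one_mul, mul_one]

end Matrix

theorem hamiltonian_pencil_symplectic_general
    {n m : ℕ}
    (A : Matrix (Fin n) (Fin n) ℝ) (B : Matrix (Fin n) (Fin m) ℝ)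
    (Q : Matrix (Fin n) (Fin n) ℝ) (R : Matrix (Fin m) (Fin m) ℝ)
    (hQ : Q.IsSymm) (hR : R.IsSymm)
    (β : ℝ) (hβ : β ≠ 0)
    (L N J : Matrix (Fin n ⊕ Fin n) (Fin n ⊕ Fin n) ℝ)
    (hL : L = fromBlocks 1 (-(β • (B * R⁻¹ * Bᵀ))) 0 (β • Aᵀ))
    (hN : N = fromBlocks A 0 (-Q) 1)
    (hJ : J = fromBlocks 0 1 (-1) 0) :
    N * J * Nᵀ = β⁻¹ • (L * J * Lᵀ)
    ∧ (IsUnit L.det → (L⁻¹ * N) * J * (L⁻¹ * N)ᵀ = β⁻¹ • J)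
    ∧ (β = 1 → IsUnit L.det → (L⁻¹ * N) * J * (L⁻¹ * N)ᵀ = J) := by
  have hS : (-(β • (B * R⁻¹ * Bᵀ))).IsSymm := ((hR.mul_nonsing_inv_mul_transpose B).smul β).neg
  have hNJN : N * J * Nᵀ = β⁻¹ • (L * J * Lᵀ) := by
    rw [hL, hN, hJ, fromBlocks_mul_symplectic_mul_transpose_of_lower_isSymm A hQ.neg,
      fromBlocks_mul_symplectic_mul_transpose_of_upper_isSymm hS, fromBlocks_smul]
    simp [smul_smul, inv_mul_cancel₀ hβ]
  have hH : IsUnit L.det → (L⁻¹ * N) * J * (L⁻¹ * N)ᵀ = β⁻¹ • J :=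
    fun hLu => nonsing_inv_mul_mul_transpose_eq_smul hLu hNJN
  exact ⟨hNJN, hH, fun hβ1 hLu => by rw [hH hLu, hβ1, inv_one, one_smul]⟩

/-- For the matrices `L = [[I, −β B R⁻¹ Bᵀ], [0, β Aᵀ]]`,
`N = [[A, 0], [−Q, I]]` and the standard symplectic form `J = [[0, I], [−I, 0]]`,
one has `N J Nᵀ = β⁻¹ L J Lᵀ`; consequently, if `L` is invertible, the Hamiltonian
matrix `H = L⁻¹ N` satisfies `H J Hᵀ = β⁻¹ J`, and in particular for `β = 1`, `H` is
a symplectic matrix. -/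
theorem hamiltonian_pencil_symplectic
    {n m : ℕ}
    (A : Matrix (Fin n) (Fin n) ℝ) (B : Matrix (Fin n) (Fin m) ℝ)
    (Q : Matrix (Fin n) (Fin n) ℝ) (R : Matrix (Fin m) (Fin m) ℝ)
    (hQ : Q.IsSymm) (hR : R.IsSymm) (hRinv : IsUnit R.det)
    (β : ℝ) (hβ : β ≠ 0)
    (L N J : Matrix (Fin n ⊕ Fin n) (Fin n ⊕ Fin n) ℝ)
    (hL : L = fromBlocks 1 (-(β • (B * R⁻¹ * Bᵀ))) 0 (β • Aᵀ))
    (hN : N = fromBlocks A 0 (-Q) 1)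
    (hJ : J = fromBlocks 0 1 (-1) 0) :
    N * J * Nᵀ = β⁻¹ • (L * J * Lᵀ)
    ∧ (IsUnit L.det → (L⁻¹ * N) * J * (L⁻¹ * N)ᵀ = β⁻¹ • J)
    ∧ (β = 1 → IsUnit L.det → (L⁻¹ * N) * J * (L⁻¹ * N)ᵀ = J) :=
  hamiltonian_pencil_symplectic_general A B Q R hQ hR β hβ L N J hL hN hJ
end
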